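/- arXiv:1610.00168 — 2 statements merged into one kernel-verified Lean document; each statement's English description precedes it below -/
import Mathlib

section
/- Let L ⊂ ℤ^{d+1} be finite with 0 ∈ L, l : L → ℝ₊, Φ(k) = min{l(λ) : λ ∈ L, ‖λ‖₀ ≤ k}, and let k^opt be the minimal ‖λ‖₀ among minimizers of l over L, with λ^opt a corresponding minimizer. If k^opt ≥ 1, then there exists an integer z with 1 ≤ z ≤ k^opt such that whenever 0 < C₀ < (1/z)[Φ(k^opt − z) − Φ(k^opt)], the vector λ^opt minimizes λ ↦ l(λ) + C₀‖λ‖₀ over L. -/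
/-!
Let `z` minimise the slope `(Φ (kopt - z) - Φ kopt) / z` over `1 ≤ z ≤ kopt`. Below that slope,
`C0` satisfies `C0 * g < Φ (kopt - g) - Φ kopt` for every `g`, i.e. removing `g` nonzero
coefficients always costs more loss than it saves in penalty, while vectors with at least `kopt`
nonzero coefficients can beat `λ^opt` neither in loss nor in penalty.
-/

open Finset

def norm0 {d : ℕ} (w : Fin (d + 1) → ℤ) : ℕ := (Finset.univ.filter (fun j => w j ≠ 0)).card

theorem exists_lt_sub_of_lt_min_slope (φ : ℕ → ℝ) {k : ℕ} (hk : 1 ≤ k) :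
    ∃ z : ℕ, 1 ≤ z ∧ z ≤ k ∧ ∀ C0 : ℝ, C0 < (1 / (z : ℝ)) * (φ (k - z) - φ k) →
      ∀ g : ℕ, 1 ≤ g → g ≤ k → C0 * g < φ (k - g) - φ k := by
  obtain ⟨z, hz, hz_min⟩ := exists_min_image (Icc 1 k)
    (fun z : ℕ => (φ (k - z) - φ k) / z) ⟨k, mem_Icc.mpr ⟨hk, le_rfl⟩⟩
  obtain ⟨hz1, hzk⟩ := mem_Icc.mp hz
  refine ⟨z, hz1, hzk, fun C0 hC0 g hg1 hgk => ?_⟩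
  have hg_pos : (0 : ℝ) < g := by exact_mod_cast hg1
  have hC0_slope : C0 < (φ (k - g) - φ k) / g := by
    rw [one_div_mul_eq_div] at hC0
    exact hC0.trans_le (hz_min g (mem_Icc.mpr ⟨hg1, hgk⟩))
  exact (lt_div_iff₀ hg_pos).mp hC0_slope

section PenalizedMinimizer

variable {α : Type*} {L : Finset α} {l : α → ℝ} {s : α → ℕ} {Φ : ℕ → ℝ}

theorem isLeast_constrained_loss_of_minimizer {a : α} (ha : a ∈ L) (ha_min : ∀ u ∈ L, l a ≤ l u)
    {k : ℕ} (hk : s a ≤ k) : IsLeast {v | ∃ w ∈ L, s w ≤ k ∧ v = l w} (l a) :=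
  ⟨⟨a, ha, hk, rfl⟩, by rintro _ ⟨w, hw, -, rfl⟩; exact ha_min w hw⟩

theorem add_penalty_le_of_lt_sub
    (hΦ : ∀ k, IsLeast {v | ∃ w ∈ L, s w ≤ k ∧ v = l w} (Φ k))
    {a : α} (ha : a ∈ L) (ha_min : ∀ u ∈ L, l a ≤ l u) {C0 : ℝ} (hC0 : 0 < C0)
    (hgap : ∀ g : ℕ, 1 ≤ g → g ≤ s a → C0 * g < Φ (s a - g) - Φ (s a)) :
    ∀ w ∈ L, l a + C0 * s a ≤ l w + C0 * s w := by
  intro w hw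
  have hΦa : Φ (s a) = l a :=
    (hΦ (s a)).unique (isLeast_constrained_loss_of_minimizer ha ha_min le_rfl)
  rcases le_or_gt (s a) (s w) with hsw | hsw
  · exact add_le_add (ha_min w hw) (by gcongr)
  · have hdrop := hgap (s a - s w) (by omega) (by omega)
    rw [Nat.sub_sub_self hsw.le, Nat.cast_sub hsw.le, hΦa] at hdrop
    have hΦw : Φ (s w) ≤ l w := (hΦ (s w)).2 ⟨w, hw, le_rfl, rfl⟩
    linarith

end PenalizedMinimizer

theorem small_C0_preserves_accuracy_general (d : ℕ) (L : Finset (Fin (d + 1) → ℤ))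
    (l : (Fin (d + 1) → ℤ) → ℝ)
    (Φ : ℕ → ℝ) (hΦ : ∀ k, IsLeast {v | ∃ w ∈ L, norm0 w ≤ k ∧ v = l w} (Φ k))
    (lamopt : Fin (d + 1) → ℤ) (hmem : lamopt ∈ L) (hglobal : ∀ u ∈ L, l lamopt ≤ l u)
    (kopt : ℕ) (hk : kopt = norm0 lamopt)
    (hk1 : 1 ≤ kopt) :
    ∃ z : ℕ, 1 ≤ z ∧ z ≤ kopt ∧ ∀ C0 : ℝ, 0 < C0 →
      C0 < (1 / (z : ℝ)) * (Φ (kopt - z) - Φ kopt) →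
      ∀ w ∈ L, l lamopt + C0 * norm0 lamopt ≤ l w + C0 * norm0 w := by
  obtain ⟨z, hz1, hzk, hgap⟩ := exists_lt_sub_of_lt_min_slope Φ hk1
  refine ⟨z, hz1, hzk, fun C0 hC0 hC0_lt => ?_⟩
  subst hk
  exact add_penalty_le_of_lt_sub hΦ hmem hglobal hC0 (hgap C0 hC0_lt)

/-- A sufficiently small trade-off parameter `C0` does not influence accuracy:
the sparsest loss minimizer minimizes the regularized objective. -/
theorem small_C0_preserves_accuracy (d : ℕ) (L : Finset (Fin (d + 1) → ℤ))
    (h0 : (0 : Fin (d + 1) → ℤ) ∈ L)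
    (l : (Fin (d + 1) → ℤ) → ℝ) (hl : ∀ w ∈ L, 0 ≤ l w)
    (Φ : ℕ → ℝ) (hΦ : ∀ k, IsLeast {v | ∃ w ∈ L, norm0 w ≤ k ∧ v = l w} (Φ k))
    (lamopt : Fin (d + 1) → ℤ) (hmem : lamopt ∈ L) (hglobal : ∀ u ∈ L, l lamopt ≤ l u)
    (kopt : ℕ) (hk : kopt = norm0 lamopt)
    (hminimal : ∀ w ∈ L, (∀ u ∈ L, l w ≤ l u) → kopt ≤ norm0 w)
    (hk1 : 1 ≤ kopt) :
    ∃ z : ℕ, 1 ≤ z ∧ z ≤ kopt ∧ ∀ C0 : ℝ, 0 < C0 →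
      C0 < (1 / (z : ℝ)) * (Φ (kopt - z) - Φ kopt) →
      ∀ w ∈ L, l lamopt + C0 * norm0 lamopt ≤ l w + C0 * norm0 w :=
  small_C0_preserves_accuracy_general d L l Φ hΦ lamopt hmem hglobal kopt hk hk1
end

section
/- If the chained-updates procedure is applied with update rules V^min ← max(V^min, L^min + C₀R^min), V^max ← min(V^max, L^max + C₀R^max), L^min ← max(L^min, V^min − C₀R^max), L^max ← min(L^max, V^max − C₀R^min), R^max ← min(R^max, ⌊(V^max − L^min)/C₀⌋), and initially V^min ≤ V(λ*) ≤ V^max, L^min ≤ l(λ*) ≤ L^max, R^min ≤ ‖λ*‖₀ ≤ R^max, then after any finite sequence of these updates the invariants V^min ≤ V(λ*) ≤ V^max, L^min ≤ l(λ*) ≤ L^max, and R^min ≤ ‖λ*‖₀ ≤ R^max still hold, where V(λ*) = l(λ*) + C₀‖λ*‖₀ and C₀ > 0. -/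
/-- State of bounds maintained by the ChainedUpdates procedure. -/
structure CUState where
  Vmin : ℝ
  Vmax : ℝ
  Lmin : ℝ
  Lmax : ℝ
  Rmin : ℕ
  Rmax : ℕ

/-- One application of a chained-updates rule. -/
inductive CUStep (C0 : ℝ) : CUState → CUState → Prop
  | vmin (s : CUState) : CUStep C0 s { s with Vmin := max s.Vmin (s.Lmin + C0 * s.Rmin) }
  | vmax (s : CUState) : CUStep C0 s { s with Vmax := min s.Vmax (s.Lmax + C0 * s.Rmax) }
  | lmin (s : CUState) : CUStep C0 s { s with Lmin := max s.Lmin (s.Vmin - C0 * s.Rmax) }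
  | lmax (s : CUState) : CUStep C0 s { s with Lmax := min s.Lmax (s.Vmax - C0 * s.Rmin) }
  | rmax (s : CUState) :
      CUStep C0 s { s with Rmax := min s.Rmax (⌊(s.Vmax - s.Lmin) / C0⌋.toNat) }

/-- Validity of the bounds with respect to the (fixed) optimal loss `lstar` and
optimal sparsity `R`, with objective `V(λ*) = lstar + C0 * R`. -/
def CUValid (C0 lstar : ℝ) (R : ℕ) (s : CUState) : Prop :=
  s.Vmin ≤ lstar + C0 * R ∧ lstar + C0 * R ≤ s.Vmax ∧
  s.Lmin ≤ lstar ∧ lstar ≤ s.Lmax ∧ s.Rmin ≤ R ∧ R ≤ s.Rmax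

theorem Nat.le_toNat_floor_div_of_mul_le {K : Type*} [Field K] [LinearOrder K]
    [IsStrictOrderedRing K] [FloorRing K] {n : ℕ} {c x : K} (hc : 0 < c) (h : c * n ≤ x) :
    n ≤ ⌊x / c⌋.toNat := by
  rw [Int.floor_toNat]
  exact Nat.le_floor ((le_div_iff₀' hc).2 h)

theorem CUStep.preserves_cuValid {C0 lstar : ℝ} {R : ℕ} {s t : CUState} (hC0 : 0 < C0)
    (hst : CUStep C0 s t) (h : CUValid C0 lstar R s) : CUValid C0 lstar R t := by
  obtain ⟨hVmin, hVmax, hLmin, hLmax, hRmin, hRmax⟩ := h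
  have hCRmin : C0 * s.Rmin ≤ C0 * R := by gcongr
  have hCRmax : C0 * R ≤ C0 * s.Rmax := by gcongr
  cases hst with
  | vmin => exact ⟨max_le hVmin (by linarith), hVmax, hLmin, hLmax, hRmin, hRmax⟩
  | vmax => exact ⟨hVmin, le_min hVmax (by linarith), hLmin, hLmax, hRmin, hRmax⟩
  | lmin => exact ⟨hVmin, hVmax, max_le hLmin (by linarith), hLmax, hRmin, hRmax⟩
  | lmax => exact ⟨hVmin, hVmax, hLmin, le_min hLmax (by linarith), hRmin, hRmax⟩
  | rmax =>
    exact ⟨hVmin, hVmax, hLmin, hLmax, hRmin,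
      le_min hRmax (Nat.le_toNat_floor_div_of_mul_le hC0 (by linarith))⟩

theorem chained_updates_sound_general (C0 lstar : ℝ) (R : ℕ) (hC0 : 0 < C0)
    (s s' : CUState) (h : Relation.ReflTransGen (CUStep C0) s s')
    (hinit : CUValid C0 lstar R s) : CUValid C0 lstar R s' := by
  induction h with
  | refl => exact hinit
  | tail _ hstep ih => exact hstep.preserves_cuValid hC0 ih

/-- Soundness of ChainedUpdates: any finite sequence of update rules preserves
validity of all bounds. -/
theorem chained_updates_sound (C0 lstar : ℝ) (R : ℕ) (hC0 : 0 < C0) (hl : 0 ≤ lstar)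
    (s s' : CUState) (h : Relation.ReflTransGen (CUStep C0) s s')
    (hinit : CUValid C0 lstar R s) : CUValid C0 lstar R s' :=
  chained_updates_sound_general C0 lstar R hC0 s s' h hinit
end
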